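/- arXiv:2002.01843 — 6 statements merged into one kernel-verified Lean document; each statement's English description precedes it below -/
import Mathlib

section
/- In the commuting-observable quantum setting, let s¹, s² be sign sequences pairable at index T, and let B = Σ_{j=1,2} (A_T + s^j_T B_T) · ∏_{i≠T} O_i(s^j_i) be the pair Bell operator. Then for every unit vector ψ, the expectation ⟨ψ, B ψ⟩ is at most 2√2. -/
/-!
Each `O_i(k)` is a self-adjoint involution, hence an isometry, so both products
`P_j = ∏_{i ≠ T} O_i(s^j_i)` preserve norms. As `s¹_T = -s²_T = ±1`, the expectation is
`Re⟪(A_T + B_T)ψ, P_1 ψ⟫ + Re⟪(A_T - B_T)ψ, P_2 ψ⟫` up to swapping the two terms, which by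
Cauchy–Schwarz is at most `‖A_Tψ + B_Tψ‖ + ‖A_Tψ - B_Tψ‖`. By the parallelogram law the squares of
these two norms add up to `2(‖A_Tψ‖² + ‖B_Tψ‖²) = 4`, so their sum is at most `2√2`.
-/

open scoped InnerProductSpace

noncomputable section

variable {N : ℕ} {H : Type} [NormedAddCommGroup H] [InnerProductSpace ℂ H]

/-- The observable associated to the symbol `k`: `O_i(0) = I`, `O_i(+1) = A_i`,
`O_i(-1) = B_i`. -/
def obs (A B : Fin N → H →ₗ[ℂ] H) (i : Fin N) (k : ℤ) : H →ₗ[ℂ] H :=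
  if k = 1 then A i else if k = -1 then B i else 1

/-- Product of commuting operators over all parties `i ≠ T` (in the canonical
order of `Fin N`; all the factors commute so the order is irrelevant). -/
def prodExcept (T : Fin N) (f : Fin N → (H →ₗ[ℂ] H)) : H →ₗ[ℂ] H :=
  (((List.finRange N).filter (fun i => i ≠ T)).map f).prod

/-- The pair Bell operator built from two pairable sign sequences. -/
def pairBell (A B : Fin N → H →ₗ[ℂ] H) (s1 s2 : Fin N → ℤ) (T : Fin N) :
    H →ₗ[ℂ] H :=
  (A T + s1 T • B T) * prodExcept T (fun i => obs A B i (s1 i))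
    + (A T + s2 T • B T) * prodExcept T (fun i => obs A B i (s2 i))

theorem norm_add_add_norm_sub_le (𝕜 : Type*) {E : Type*} [RCLike 𝕜] [NormedAddCommGroup E]
    [InnerProductSpace 𝕜 E] (x y : E) :
    ‖x + y‖ + ‖x - y‖ ≤ 2 * √(‖x‖ ^ 2 + ‖y‖ ^ 2) := by
  have hpar := parallelogram_law_with_norm 𝕜 x y
  rw [← Real.sqrt_sq zero_le_two, ← Real.sqrt_mul (sq_nonneg 2)]
  apply Real.le_sqrt_of_sq_le
  nlinarith [sq_nonneg (‖x + y‖ - ‖x - y‖)]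

section InnerProductSpace

variable {𝕜 E : Type*} [RCLike 𝕜] [NormedAddCommGroup E] [InnerProductSpace 𝕜 E]

open RCLike

theorem LinearMap.IsSymmetric.norm_apply_of_mul_self_eq_one {S : E →ₗ[𝕜] E}
    (hS : S.IsSymmetric) (hS2 : S * S = 1) (x : E) : ‖S x‖ = ‖x‖ := by
  have hsq : ‖S x‖ ^ 2 = ‖x‖ ^ 2 := by
    rw [@norm_sq_eq_re_inner 𝕜, @norm_sq_eq_re_inner 𝕜, hS, ← Module.End.mul_apply, hS2,
      Module.End.one_apply]
  exact (sq_eq_sq₀ (norm_nonneg _) (norm_nonneg _)).mp hsq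

theorem LinearMap.IsSymmetric.re_inner_apply_le {S : E →ₗ[𝕜] E} (hS : S.IsSymmetric)
    (x y : E) : re ⟪x, S y⟫_𝕜 ≤ ‖S x‖ * ‖y‖ := by
  rw [← hS]
  exact re_inner_le_norm _ _

/-- The CHSH bound with the measurement on the other side replaced by arbitrary unit vectors. -/
theorem re_inner_add_apply_add_re_inner_sub_apply_le {S R : E →ₗ[𝕜] E}
    (hS : S.IsSymmetric) (hR : R.IsSymmetric) {x u v : E}
    (hSx : ‖S x‖ = 1) (hRx : ‖R x‖ = 1) (hu : ‖u‖ = 1) (hv : ‖v‖ = 1) :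
    re ⟪x, (S + R) u⟫_𝕜 + re ⟪x, (S - R) v⟫_𝕜 ≤ 2 * √2 :=
  calc re ⟪x, (S + R) u⟫_𝕜 + re ⟪x, (S - R) v⟫_𝕜
      ≤ ‖(S + R) x‖ * ‖u‖ + ‖(S - R) x‖ * ‖v‖ :=
        add_le_add ((hS.add hR).re_inner_apply_le x u) ((hS.sub hR).re_inner_apply_le x v)
    _ = ‖S x + R x‖ + ‖S x - R x‖ := by simp [hu, hv]
    _ ≤ 2 * √(‖S x‖ ^ 2 + ‖R x‖ ^ 2) := norm_add_add_norm_sub_le 𝕜 _ _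
    _ = 2 * √2 := by norm_num [hSx, hRx]

end InnerProductSpace

theorem norm_list_prod_apply {R E : Type*} [Semiring R] [SeminormedAddCommGroup E] [Module R E]
    {l : List (Module.End R E)} (hl : ∀ f ∈ l, ∀ x, ‖f x‖ = ‖x‖) (x : E) :
    ‖l.prod x‖ = ‖x‖ := by
  induction l with
  | nil => rfl
  | cons f l ih =>
    rw [List.prod_cons, Module.End.mul_apply, hl f List.mem_cons_self,
      ih fun g hg => hl g (List.mem_cons_of_mem f hg)]

theorem norm_prodExcept_apply {T : Fin N} {f : Fin N → H →ₗ[ℂ] H}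
    (hf : ∀ i x, ‖f i x‖ = ‖x‖) (x : H) : ‖prodExcept T f x‖ = ‖x‖ :=
  norm_list_prod_apply (by simpa [prodExcept] using fun i _ => hf i) x

theorem norm_obs_apply {A B : Fin N → H →ₗ[ℂ] H}
    (hAsa : ∀ i, (A i).IsSymmetric) (hBsa : ∀ i, (B i).IsSymmetric)
    (hA2 : ∀ i, A i * A i = 1) (hB2 : ∀ i, B i * B i = 1) (i : Fin N) (k : ℤ) (x : H) :
    ‖obs A B i k x‖ = ‖x‖ := by
  unfold obs
  split_ifs
  · exact (hAsa i).norm_apply_of_mul_self_eq_one (hA2 i) x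
  · exact (hBsa i).norm_apply_of_mul_self_eq_one (hB2 i) x
  · rfl

theorem quantum_pair_bell_bound_general
    (A B : Fin N → H →ₗ[ℂ] H)
    (hAsa : ∀ i, (A i).IsSymmetric) (hBsa : ∀ i, (B i).IsSymmetric)
    (hA2 : ∀ i, A i * A i = 1) (hB2 : ∀ i, B i * B i = 1)
    (s1 s2 : Fin N → ℤ)
    (T : Fin N) (hpair : s1 T * s2 T = -1)
    (ψ : H) (hψ : ‖ψ‖ = 1) :
    (⟪ψ, (pairBell A B s1 s2 T) ψ⟫_ℂ).re ≤ 2 * Real.sqrt 2 := by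
  have hP (s : Fin N → ℤ) : ‖prodExcept T (fun i => obs A B i (s i)) ψ‖ = 1 :=
    (norm_prodExcept_apply (norm_obs_apply hAsa hBsa hA2 hB2 · _) ψ).trans hψ
  have hAψ : ‖A T ψ‖ = 1 := ((hAsa T).norm_apply_of_mul_self_eq_one (hA2 T) ψ).trans hψ
  have hBψ : ‖B T ψ‖ = 1 := ((hBsa T).norm_apply_of_mul_self_eq_one (hB2 T) ψ).trans hψ
  rw [pairBell, LinearMap.add_apply, inner_add_right, Complex.add_re, Module.End.mul_apply,
    Module.End.mul_apply]
  rcases Int.eq_one_or_neg_one_of_mul_eq_neg_one' hpair with ⟨h1, h2⟩ | ⟨h1, h2⟩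
  · rw [h1, h2, one_zsmul, neg_one_zsmul, ← sub_eq_add_neg]
    exact re_inner_add_apply_add_re_inner_sub_apply_le (hAsa T) (hBsa T) hAψ hBψ (hP s1) (hP s2)
  · rw [h1, h2, one_zsmul, neg_one_zsmul, ← sub_eq_add_neg, add_comm]
    exact re_inner_add_apply_add_re_inner_sub_apply_le (hAsa T) (hBsa T) hAψ hBψ (hP s2) (hP s1)

theorem quantum_pair_bell_bound [FiniteDimensional ℂ H]
    (A B : Fin N → H →ₗ[ℂ] H)
    (hAsa : ∀ i, (A i).IsSymmetric) (hBsa : ∀ i, (B i).IsSymmetric)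
    (hA2 : ∀ i, A i * A i = 1) (hB2 : ∀ i, B i * B i = 1)
    (hAA : ∀ i j, i ≠ j → Commute (A i) (A j))
    (hBB : ∀ i j, i ≠ j → Commute (B i) (B j))
    (hAB : ∀ i j, i ≠ j → Commute (A i) (B j))
    (s1 s2 : Fin N → ℤ)
    (hs1 : ∀ i, s1 i = -1 ∨ s1 i = 0 ∨ s1 i = 1)
    (hs2 : ∀ i, s2 i = -1 ∨ s2 i = 0 ∨ s2 i = 1)
    (T : Fin N) (hpair : s1 T * s2 T = -1)
    (ψ : H) (hψ : ‖ψ‖ = 1) :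
    (⟪ψ, (pairBell A B s1 s2 T) ψ⟫_ℂ).re ≤ 2 * Real.sqrt 2 :=
  quantum_pair_bell_bound_general A B hAsa hBsa hA2 hB2 s1 s2 T hpair ψ hψ

end
end

section
/- In the commuting-observable quantum setting, let s¹, s² be sign sequences pairable at index T, let B = Σ_{j=1,2} (A_T + s^j_T B_T) · ∏_{i≠T} O_i(s^j_i), and put K_j = (1/√2)(A_T + s^j_T B_T) · ∏_{i≠T} O_i(s^j_i) for j = 1, 2. Then each K_j is Hermitian, the exact operator identity 2√2·I − B = (1/√2)·[(I − K₁)² + (I − K₂)²] holds, and consequently 2√2·I − B is positive semidefinite. -/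
/-!
STATEMENT 2: sum-of-squares identity `2√2·I − B = (1/√2)[(I−K₁)² + (I−K₂)²]`
for the pair Bell operator, Hermiticity of the `K_j`, and positive
semidefiniteness of `2√2·I − B`.
-/

open scoped InnerProductSpace

noncomputable section

variable {N : ℕ} {H : Type} [NormedAddCommGroup H] [InnerProductSpace ℂ H]

/-- `K_j = (1/√2)(A_T + s^j_T B_T) ∏_{i≠T} O_i(s^j_i)`. -/
def sosTerm (A B : Fin N → H →ₗ[ℂ] H) (s : Fin N → ℤ) (T : Fin N) :
    H →ₗ[ℂ] H :=
  ((Real.sqrt 2 : ℂ))⁻¹ •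
    ((A T + s T • B T) * prodExcept T (fun i => obs A B i (s i)))

-- helper lemmas
lemma symMul {S R : H →ₗ[ℂ] H} (hS : S.IsSymmetric) (hR : R.IsSymmetric)
    (h : Commute S R) : (S * R).IsSymmetric := by
  intro x y
  simp only [Module.End.mul_apply]
  rw [hS (R x) y, hR x (S y), show R (S y) = (S * R) y by
    rw [← Module.End.mul_apply, ← h.eq], Module.End.mul_apply]

lemma listProdSq (l : List (H →ₗ[ℂ] H)) (hc : l.Pairwise Commute)
    (h1 : ∀ x ∈ l, x * x = 1) : l.prod * l.prod = 1 := by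
  induction l with
  | nil => simp
  | cons a t ih =>
    rcases List.pairwise_cons.mp hc with ⟨ha, ht⟩
    have hcomm : Commute a t.prod := Commute.list_prod_right _ _ (fun y hy => ha y hy)
    have h1a : a * a = 1 := h1 a (by simp)
    have hpr : t.prod * t.prod = 1 := ih ht (fun x hx => h1 x (List.mem_cons_of_mem _ hx))
    simp only [List.prod_cons]
    rw [hcomm.symm.mul_mul_mul_comm, h1a, hpr, one_mul]

lemma listProdSym (l : List (H →ₗ[ℂ] H)) (hc : l.Pairwise Commute)
    (hs : ∀ x ∈ l, x.IsSymmetric) : l.prod.IsSymmetric := by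
  induction l with
  | nil => intro x y; rfl
  | cons a t ih =>
    rcases List.pairwise_cons.mp hc with ⟨ha, ht⟩
    have hcomm : Commute a t.prod := Commute.list_prod_right _ _ (fun y hy => ha y hy)
    simp only [List.prod_cons]
    exact symMul (hs a (by simp)) (ih ht (fun x hx => hs x (List.mem_cons_of_mem _ hx))) hcomm

lemma symSmulReal {c : ℂ} (hc : (starRingEnd ℂ) c = c) {S : H →ₗ[ℂ] H}
    (hS : S.IsSymmetric) : (c • S).IsSymmetric := by
  intro x y
  simp only [LinearMap.smul_apply, inner_smul_left, inner_smul_right, hc, hS x y]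

theorem pair_bell_sos [FiniteDimensional ℂ H]
    (A B : Fin N → H →ₗ[ℂ] H)
    (hAsa : ∀ i, (A i).IsSymmetric) (hBsa : ∀ i, (B i).IsSymmetric)
    (hA2 : ∀ i, A i * A i = 1) (hB2 : ∀ i, B i * B i = 1)
    (hAA : ∀ i j, i ≠ j → Commute (A i) (A j))
    (hBB : ∀ i j, i ≠ j → Commute (B i) (B j))
    (hAB : ∀ i j, i ≠ j → Commute (A i) (B j))
    (s1 s2 : Fin N → ℤ)
    (hs1 : ∀ i, s1 i = -1 ∨ s1 i = 0 ∨ s1 i = 1)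
    (hs2 : ∀ i, s2 i = -1 ∨ s2 i = 0 ∨ s2 i = 1)
    (T : Fin N) (hpair : s1 T * s2 T = -1) :
    (sosTerm A B s1 T).IsSymmetric ∧ (sosTerm A B s2 T).IsSymmetric ∧
    ((2 * Real.sqrt 2 : ℂ) • (1 : H →ₗ[ℂ] H) - pairBell A B s1 s2 T
      = ((Real.sqrt 2 : ℂ))⁻¹ •
          ((1 - sosTerm A B s1 T) ^ 2 + (1 - sosTerm A B s2 T) ^ 2)) ∧
    (∀ φ : H,
      0 ≤ (⟪φ, ((2 * Real.sqrt 2 : ℂ) • (1 : H →ₗ[ℂ] H)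
              - pairBell A B s1 s2 T) φ⟫_ℂ).re) := by
  set r : ℂ := (Real.sqrt 2 : ℂ) with hr
  have hrr : r * r = 2 := by
    rw [hr, ← Complex.ofReal_mul, Real.mul_self_sqrt (by norm_num)]; norm_num
  have hrne : r ≠ 0 := by
    intro h; rw [h] at hrr; norm_num at hrr
  -- basic facts about obs
  have obsSq : ∀ i k, obs A B i k * obs A B i k = 1 := by
    intro i k; unfold obs; split_ifs
    exacts [hA2 i, hB2 i, one_mul 1]
  have obsSym : ∀ i k, (obs A B i k).IsSymmetric := by
    intro i k; unfold obs; split_ifs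
    exacts [hAsa i, hBsa i, fun x y => rfl]
  have obsComm : ∀ (i j : Fin N), i ≠ j → ∀ (k m : ℤ),
      Commute (obs A B i k) (obs A B j m) := by
    intro i j hij k m; unfold obs; split_ifs
    exacts [hAA i j hij, hAB i j hij, Commute.one_right _,
      (hAB j i hij.symm).symm, hBB i j hij, Commute.one_right _,
      Commute.one_left _, Commute.one_left _, Commute.one_left _]
  -- the list underlying prodExcept
  set l : List (Fin N) := (List.finRange N).filter (fun i => i ≠ T) with hl
  have hmem : ∀ i ∈ l, i ≠ T := by
    intro i hi
    rw [hl, List.mem_filter] at hi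
    simpa using hi.2
  have hnodup : l.Nodup := (List.nodup_finRange N).filter _
  have hpw : ∀ s : Fin N → ℤ,
      ((l.map (fun i => obs A B i (s i))).Pairwise Commute) := by
    intro s
    have hne : l.Pairwise (· ≠ ·) := hnodup
    exact hne.map _ (fun {a b} hab => obsComm a b hab (s a) (s b))
  have hmemmap : ∀ (s : Fin N → ℤ) y, y ∈ l.map (fun i => obs A B i (s i)) →
      ∃ i, i ≠ T ∧ y = obs A B i (s i) := by
    intro s y hy
    rw [List.mem_map] at hy
    obtain ⟨i, hi, rfl⟩ := hy
    exact ⟨i, hmem i hi, rfl⟩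
  -- Q facts
  have hQ : ∀ s : Fin N → ℤ, prodExcept T (fun i => obs A B i (s i))
      = (l.map (fun i => obs A B i (s i))).prod := fun s => rfl
  have hQsq : ∀ s : Fin N → ℤ,
      prodExcept T (fun i => obs A B i (s i)) * prodExcept T (fun i => obs A B i (s i)) = 1 := by
    intro s
    rw [hQ]
    refine listProdSq _ (hpw s) ?_
    intro x hx
    obtain ⟨i, _, rfl⟩ := hmemmap s x hx
    exact obsSq i (s i)
  have hQsym : ∀ s : Fin N → ℤ, (prodExcept T (fun i => obs A B i (s i))).IsSymmetric := by
    intro s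
    rw [hQ]
    refine listProdSym _ (hpw s) ?_
    intro x hx
    obtain ⟨i, _, rfl⟩ := hmemmap s x hx
    exact obsSym i (s i)
  have hQA : ∀ s : Fin N → ℤ, Commute (A T) (prodExcept T (fun i => obs A B i (s i))) := by
    intro s
    rw [hQ]
    refine Commute.list_prod_right _ _ ?_
    intro y hy
    obtain ⟨i, hiT, rfl⟩ := hmemmap s y hy
    unfold obs; split_ifs
    exacts [hAA T i (Ne.symm hiT), hAB T i (Ne.symm hiT), Commute.one_right _]
  have hQB : ∀ s : Fin N → ℤ, Commute (B T) (prodExcept T (fun i => obs A B i (s i))) := by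
    intro s
    rw [hQ]
    refine Commute.list_prod_right _ _ ?_
    intro y hy
    obtain ⟨i, hiT, rfl⟩ := hmemmap s y hy
    unfold obs; split_ifs
    exacts [(hAB i T hiT).symm, hBB T i (Ne.symm hiT), Commute.one_right _]
  -- P facts
  have hPsym : ∀ s : Fin N → ℤ, (A T + s T • B T).IsSymmetric := by
    intro s
    refine (hAsa T).add ?_
    intro x y
    rw [← Int.cast_smul_eq_zsmul ℂ]
    simp only [LinearMap.smul_apply, inner_smul_left, inner_smul_right,
      map_intCast, hBsa T x y]
  have hPQ : ∀ s : Fin N → ℤ,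
      Commute (A T + s T • B T) (prodExcept T (fun i => obs A B i (s i))) := by
    intro s
    refine (hQA s).add_left ?_
    rw [zsmul_eq_mul]
    exact ((Int.cast_commute (s T) _).mul_left (hQB s))
  -- symmetry of the K's
  have hconj : (starRingEnd ℂ) r⁻¹ = r⁻¹ := by
    rw [hr, map_inv₀, Complex.conj_ofReal]
  have hKsym : ∀ s : Fin N → ℤ, (sosTerm A B s T).IsSymmetric := by
    intro s
    exact symSmulReal hconj (symMul (hPsym s) (hQsym s) (hPQ s))
  refine ⟨hKsym s1, hKsym s2, ?_⟩
  -- sign case analysis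
  have hcase : (s1 T = 1 ∧ s2 T = -1) ∨ (s1 T = -1 ∧ s2 T = 1) := by
    rcases hs1 T with h | h | h <;> rcases hs2 T with h' | h' | h' <;>
      rw [h, h'] at hpair <;>
      first
        | (left; exact ⟨h, h'⟩)
        | (right; exact ⟨h, h'⟩)
        | norm_num at hpair
  -- P1² + P2² = 4
  have key4 : ∀ X Y : H →ₗ[ℂ] H, X * X = 1 → Y * Y = 1 →
      (X + Y) ^ 2 + (X + -Y) ^ 2 = 1 + 1 + 1 + 1 := by
    intro X Y hX hY
    have : (X + Y) ^ 2 + (X + -Y) ^ 2 = X * X + X * X + (Y * Y + Y * Y) := by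
      noncomm_ring
    rw [this, hX, hY]; abel
  have hPP : (A T + s1 T • B T) ^ 2 + (A T + s2 T • B T) ^ 2 = 1 + 1 + 1 + 1 := by
    rcases hcase with ⟨h1, h2⟩ | ⟨h1, h2⟩ <;>
      rw [h1, h2, one_zsmul, neg_one_zsmul]
    · exact key4 _ _ (hA2 T) (hB2 T)
    · have := key4 (A T) (B T) (hA2 T) (hB2 T)
      calc (A T + -B T) ^ 2 + (A T + B T) ^ 2
          = (A T + B T) ^ 2 + (A T + -B T) ^ 2 := by abel
        _ = 1 + 1 + 1 + 1 := this
  -- K₁² + K₂² = 2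
  have hc2 : r⁻¹ ^ 2 = (2:ℂ)⁻¹ := by
    rw [inv_pow, pow_two, hrr]
  have hKsq : ∀ s : Fin N → ℤ, (sosTerm A B s T) ^ 2
      = (2:ℂ)⁻¹ • ((A T + s T • B T) ^ 2) := by
    intro s
    rw [sosTerm, smul_pow, hc2, (hPQ s).mul_pow, pow_two
      (prodExcept T fun i => obs A B i (s i)), hQsq s, mul_one]
  have hKK : (sosTerm A B s1 T) ^ 2 + (sosTerm A B s2 T) ^ 2 = 1 + 1 := by
    rw [hKsq s1, hKsq s2, ← smul_add, hPP, show ((1:H →ₗ[ℂ] H) + 1 + 1 + 1)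
      = (2:ℂ) • (1 + 1) by rw [two_smul]; abel, smul_smul]
    norm_num
  -- the sum-of-squares identity
  set K1 := sosTerm A B s1 T
  set K2 := sosTerm A B s2 T
  have hsum : (1 - K1) ^ 2 + (1 - K2) ^ 2
      = (1 + 1 + 1 + 1) - (K1 + K2) - (K1 + K2) := by
    have e : (1 - K1) ^ 2 + (1 - K2) ^ 2
        = (K1 ^ 2 + K2 ^ 2) + ((1 + 1) - (K1 + K2) - (K1 + K2)) := by noncomm_ring
    rw [e, hKK]; abel
  have hK12 : K1 + K2 = r⁻¹ • pairBell A B s1 s2 T := by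
    rw [pairBell, smul_add]; rfl
  have h4smul : r⁻¹ • ((1:H →ₗ[ℂ] H) + 1 + 1 + 1) = (2 * r) • (1 : H →ₗ[ℂ] H) := by
    rw [show ((1:H →ₗ[ℂ] H) + 1 + 1 + 1) = (4:ℂ) • 1 by
      rw [show (4:ℂ) = 1 + 1 + 1 + 1 by norm_num]
      simp [add_smul], smul_smul]
    congr 1
    field_simp
    linear_combination (-2 : ℂ) * hrr
  have hhalf : r⁻¹ * r⁻¹ = (2:ℂ)⁻¹ := by rw [← mul_inv, hrr]
  have hid : (2 * r) • (1 : H →ₗ[ℂ] H) - pairBell A B s1 s2 T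
      = r⁻¹ • ((1 - K1) ^ 2 + (1 - K2) ^ 2) := by
    rw [hsum, smul_sub, smul_sub, hK12, smul_smul, hhalf, h4smul,
      sub_sub, ← add_smul, show ((2:ℂ)⁻¹ + 2⁻¹) = 1 by norm_num, one_smul]
  refine ⟨hid, ?_⟩
  -- positivity
  intro φ
  rw [hid]
  have hS1 : (1 - K1).IsSymmetric := LinearMap.IsSymmetric.sub (fun x y => rfl) (hKsym s1)
  have hS2 : (1 - K2).IsSymmetric := LinearMap.IsSymmetric.sub (fun x y => rfl) (hKsym s2)
  simp only [pow_two, LinearMap.smul_apply, LinearMap.add_apply, Module.End.mul_apply,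
    inner_smul_right, inner_add_right]
  rw [← hS1 φ ((1 - K1) φ), ← hS2 φ ((1 - K2) φ)]
  have h1 : ⟪(1 - K1) φ, (1 - K1) φ⟫_ℂ = ((‖(1 - K1) φ‖ ^ 2 : ℝ) : ℂ) := by
    rw [inner_self_eq_norm_sq_to_K]; push_cast; rfl
  have h2 : ⟪(1 - K2) φ, (1 - K2) φ⟫_ℂ = ((‖(1 - K2) φ‖ ^ 2 : ℝ) : ℂ) := by
    rw [inner_self_eq_norm_sq_to_K]; push_cast; rfl
  rw [h1, h2, hr, ← Complex.ofReal_inv, ← Complex.ofReal_add, ← Complex.ofReal_mul,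
    Complex.ofReal_re]
  positivity

end
end

section
/- Let AC ⊆ {1,…,N}, let P be a finite family of pairs (s,t) of stabilizer sign sequences and R a finite family of sign sequences satisfying Requirements 1 and 2. Then for every deterministic local hidden-variable assignment a, b : {1,…,N} → {−1,+1}, the classical Bell value Σ_{(s,t)∈P} [ (a_{T_{s,t}} + s_{T_{s,t}} b_{T_{s,t}})·∏_{i∉AC} p_i(s_i) + (a_{T_{s,t}} + t_{T_{s,t}} b_{T_{s,t}})·∏_{i∉AC} p_i(t_i) ] + Σ_{u∈R} ∏_{i∉AC} p_i(u_i) is at most 2|P| + |R| (families counted with multiplicity). -/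
/-!
Each pair `(s, t)` contributes a CHSH expression: since `s_T t_T = -1`, the signs `s_T, t_T` are
`1, -1` in some order, so the contribution is `(a + b) x + (a - b) y` up to replacing `b` by `-b`,
where `x, y = ±1` are the products over the positions outside `AC`. It is at most
`|a + b| + |a - b| = 2`. Each `u ∈ R` contributes a sign, hence at most `1`.
-/

/-- The deterministic local-hidden-variable value assigned to the symbol `k`:
`p_i(0) = 1`, `p_i(+1) = a_i`, `p_i(-1) = b_i`. -/
def clObs {N : ℕ} (a b : Fin N → ℤ) (i : Fin N) (k : ℤ) : ℤ :=
  if k = 1 then a i else if k = -1 then b i else 1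

section CHSH

variable {R : Type*} [CommRing R] [LinearOrder R] [IsStrictOrderedRing R]

lemma abs_add_add_abs_sub_le_two {a b : R} (ha : |a| ≤ 1) (hb : |b| ≤ 1) :
    |a + b| + |a - b| ≤ 2 := by
  rw [abs_le] at ha hb
  rcases abs_cases (a + b) with ⟨h₁, -⟩ | ⟨h₁, -⟩ <;>
    rcases abs_cases (a - b) with ⟨h₂, -⟩ | ⟨h₂, -⟩ <;> linarith

lemma chsh_le_two {a b x y : R} (ha : |a| ≤ 1) (hb : |b| ≤ 1) (hx : |x| ≤ 1) (hy : |y| ≤ 1) :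
    (a + b) * x + (a - b) * y ≤ 2 :=
  calc (a + b) * x + (a - b) * y
      ≤ |a + b| * |x| + |a - b| * |y| := by
        rw [← abs_mul, ← abs_mul]
        exact add_le_add (le_abs_self _) (le_abs_self _)
    _ ≤ |a + b| + |a - b| := by
        gcongr <;> apply mul_le_of_le_one_right (abs_nonneg _) <;> assumption
    _ ≤ 2 := abs_add_add_abs_sub_le_two ha hb

end CHSH

lemma anticommuting_term_le_two {s t a b x y : ℤ} (hst : s * t = -1)
    (ha : |a| ≤ 1) (hb : |b| ≤ 1) (hx : |x| ≤ 1) (hy : |y| ≤ 1) :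
    (a + s * b) * x + (a + t * b) * y ≤ 2 := by
  rcases Int.eq_one_or_neg_one_of_mul_eq_neg_one' hst with ⟨rfl, rfl⟩ | ⟨rfl, rfl⟩
  · simpa [sub_eq_add_neg] using chsh_le_two ha hb hx hy
  · simpa [sub_eq_add_neg] using chsh_le_two ha (b := -b) (by rwa [abs_neg]) hx hy

lemma abs_clObs_le_one {N : ℕ} {a b : Fin N → ℤ} (ha : ∀ i, |a i| ≤ 1) (hb : ∀ i, |b i| ≤ 1)
    (i : Fin N) (k : ℤ) : |clObs a b i k| ≤ 1 := by
  unfold clObs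
  split_ifs
  exacts [ha i, hb i, le_of_eq abs_one]

lemma abs_prod_clObs_le_one {N : ℕ} {a b : Fin N → ℤ} (ha : ∀ i, |a i| ≤ 1)
    (hb : ∀ i, |b i| ≤ 1) (S : Finset (Fin N)) (u : Fin N → ℤ) :
    |∏ i ∈ S, clObs a b i (u i)| ≤ 1 := by
  rw [Finset.abs_prod]
  exact Finset.prod_le_one (fun _ _ => abs_nonneg _) fun i _ => abs_clObs_le_one ha hb i (u i)

lemma List.sum_map_le_length_mul {α R : Type*} [Semiring R] [PartialOrder R]
    [IsOrderedAddMonoid R] (l : List α) (f : α → R) (c : R) (h : ∀ x ∈ l, f x ≤ c) :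
    (l.map f).sum ≤ l.length * c := by
  simpa [nsmul_eq_mul] using (l.map f).sum_le_card_nsmul c (by simpa using h)

theorem classical_general_bell_bound_general {N : ℕ}
    (AC : Finset (Fin N))
    (P : List ((Fin N → ℤ) × (Fin N → ℤ))) (R : List (Fin N → ℤ))
    -- `Tsel p` is the unique anti-commuting position of the pair `p` inside `AC`
    (Tsel : (Fin N → ℤ) × (Fin N → ℤ) → Fin N)
    -- Requirement 1
    (hreq1 : ∀ p ∈ P, Tsel p ∈ AC ∧ p.1 (Tsel p) * p.2 (Tsel p) = -1 ∧
      ∀ i ∈ AC, i ≠ Tsel p → p.1 i = 0 ∧ p.2 i = 0)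
    (a b : Fin N → ℤ)
    (ha : ∀ i, a i = 1 ∨ a i = -1) (hb : ∀ i, b i = 1 ∨ b i = -1) :
    (P.map (fun p =>
        (a (Tsel p) + p.1 (Tsel p) * b (Tsel p)) *
            ∏ i ∈ Finset.univ \ AC, clObs a b i (p.1 i)
        + (a (Tsel p) + p.2 (Tsel p) * b (Tsel p)) *
            ∏ i ∈ Finset.univ \ AC, clObs a b i (p.2 i))).sum
      + (R.map (fun u => ∏ i ∈ Finset.univ \ AC, clObs a b i (u i))).sum
      ≤ 2 * P.length + R.length := by
  have ha' : ∀ i, |a i| ≤ 1 := fun i => ((abs_eq zero_le_one).2 (ha i)).le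
  have hb' : ∀ i, |b i| ≤ 1 := fun i => ((abs_eq zero_le_one).2 (hb i)).le
  have hprod := abs_prod_clObs_le_one ha' hb' (Finset.univ \ AC)
  calc _ ≤ (P.length : ℤ) * 2 + R.length * 1 :=
        add_le_add
          (P.sum_map_le_length_mul _ _ fun p hp => anticommuting_term_le_two (hreq1 p hp).2.1
            (ha' _) (hb' _) (hprod p.1) (hprod p.2))
          (R.sum_map_le_length_mul _ _ fun u _ => (le_abs_self _).trans (hprod u))
    _ = 2 * P.length + R.length := by ring

theorem classical_general_bell_bound {N : ℕ}
    (AC : Finset (Fin N))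
    (P : List ((Fin N → ℤ) × (Fin N → ℤ))) (R : List (Fin N → ℤ))
    (hsignP : ∀ p ∈ P, (∀ i, p.1 i = -1 ∨ p.1 i = 0 ∨ p.1 i = 1) ∧
                       (∀ i, p.2 i = -1 ∨ p.2 i = 0 ∨ p.2 i = 1))
    (hsignR : ∀ u ∈ R, ∀ i, u i = -1 ∨ u i = 0 ∨ u i = 1)
    -- `Tsel p` is the unique anti-commuting position of the pair `p` inside `AC`
    (Tsel : (Fin N → ℤ) × (Fin N → ℤ) → Fin N)
    -- Requirement 1
    (hreq1 : ∀ p ∈ P, Tsel p ∈ AC ∧ p.1 (Tsel p) * p.2 (Tsel p) = -1 ∧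
      ∀ i ∈ AC, i ≠ Tsel p → p.1 i = 0 ∧ p.2 i = 0)
    -- Requirement 2
    (hreq2 : ∀ u ∈ R, ∀ i ∈ AC, u i = 0)
    (a b : Fin N → ℤ)
    (ha : ∀ i, a i = 1 ∨ a i = -1) (hb : ∀ i, b i = 1 ∨ b i = -1) :
    (P.map (fun p =>
        (a (Tsel p) + p.1 (Tsel p) * b (Tsel p)) *
            ∏ i ∈ Finset.univ \ AC, clObs a b i (p.1 i)
        + (a (Tsel p) + p.2 (Tsel p) * b (Tsel p)) *
            ∏ i ∈ Finset.univ \ AC, clObs a b i (p.2 i))).sum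
      + (R.map (fun u => ∏ i ∈ Finset.univ \ AC, clObs a b i (u i))).sum
      ≤ 2 * P.length + R.length :=
  classical_general_bell_bound_general AC P R Tsel hreq1 a b ha hb
end

section
/- In the commuting-observable quantum setting, let AC ⊆ {1,…,N}, let P be a finite family of pairs (s,t) of stabilizer sign sequences and R a finite family of sign sequences satisfying Requirements 1 and 2, and let B = Σ_{(s,t)∈P}(B_s + B_t) + Σ_{u∈R} B_u be the associated Bell operator, where B_s = ∏_{i∈AC, s_i≠0}(A_i + s_i B_i) · ∏_{i∉AC} O_i(s_i). Then the operator (2√2·|P| + |R|)·I − B is positive semidefinite; in particular ⟨ψ, B ψ⟩ ≤ 2√2·|P| + |R| for every unit vector ψ. -/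
/-!
For a pair `(s, t)` with Requirement-1 index `T`, the term `B_s` factors as `(A_T + s_T B_T) · O_s`,
where `O_s = ∏_{i ∉ AC} O_i(s_i)` is a symmetric involution commuting with party `T`. Hence `B_s` is
symmetric with `B_s² = (A_T + s_T B_T)²`, and since `s_T t_T = -1` we get
`B_s² + B_t² = (A_T + B_T)² + (A_T - B_T)² = 4`. Any symmetric `X, Y` with `X² + Y² = 4` satisfy
`X + Y ≤ 2√2` in the Loewner order, because `2√2 (2√2 - X - Y) = (√2 - X)² + (√2 - Y)²`.
By Requirement 2 each `B_u` with `u ∈ R` is just `O_u`, and `2 (1 - O_u) = (1 - O_u)²` gives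
`B_u ≤ 1`. Summing these operator inequalities gives the bound.
-/

open scoped InnerProductSpace

noncomputable section

variable {N : ℕ} {H : Type} [NormedAddCommGroup H] [InnerProductSpace ℂ H]

/-- The Bell operator term
`B_s = ∏_{i∈AC, s_i≠0} (A_i + s_i B_i) · ∏_{i∉AC} O_i(s_i)`
(products taken in the canonical order of `Fin N`; all factors commute). -/
def bellTerm (A B : Fin N → H →ₗ[ℂ] H) (AC : Finset (Fin N)) (s : Fin N → ℤ) :
    H →ₗ[ℂ] H :=
  (((List.finRange N).filter (fun i => i ∈ AC ∧ s i ≠ 0)).map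
      (fun i => A i + s i • B i)).prod *
  (((List.finRange N).filter (fun i => i ∉ AC)).map
      (fun i => obs A B i (s i))).prod

theorem add_zsmul_mul_self_add_add_zsmul_mul_self {R : Type*} [Ring R] {a b : R}
    (ha : a * a = 1) (hb : b * b = 1) {σ τ : ℤ} (hστ : σ * τ = -1) :
    (a + σ • b) * (a + σ • b) + (a + τ • b) * (a + τ • b) = 4 := by
  rcases Int.eq_one_or_neg_one_of_mul_eq_neg_one' hστ with ⟨rfl, rfl⟩ | ⟨rfl, rfl⟩ <;>
  · simp only [one_smul, neg_smul, ← sub_eq_add_neg, add_mul, mul_add, sub_mul, mul_sub, ha, hb]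
    abel_nf
    norm_num

theorem List.prod_mul_self_eq_one_of_pairwise_commute {M : Type*} [Monoid M] {l : List M}
    (hl : l.Pairwise Commute) (h : ∀ x ∈ l, x * x = 1) : l.prod * l.prod = 1 := by
  induction l with
  | nil => simp
  | cons a l ih =>
    rw [List.pairwise_cons] at hl
    rw [List.forall_mem_cons] at h
    rw [List.prod_cons, (Commute.list_prod_right _ _ hl.1).symm.mul_mul_mul_comm, h.1,
      ih hl.2 h.2, one_mul]

section Operators

open scoped ComplexOrder

variable {𝕜 E : Type*} [RCLike 𝕜] [NormedAddCommGroup E] [InnerProductSpace 𝕜 E]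

theorem LinearMap.isSymmetric_list_prod {l : List (E →ₗ[𝕜] E)} (hl : l.Pairwise Commute)
    (h : ∀ T ∈ l, T.IsSymmetric) : l.prod.IsSymmetric := by
  induction l with
  | nil => exact LinearMap.IsSymmetric.one
  | cons a l ih =>
    rw [List.pairwise_cons] at hl
    rw [List.forall_mem_cons] at h
    exact h.1.mul_of_commute (ih hl.2 h.2) (Commute.list_prod_right _ _ hl.1)

theorem LinearMap.IsSymmetric.isPositive_mul_self {T : E →ₗ[𝕜] E} (hT : T.IsSymmetric) :
    (T * T).IsPositive :=
  ⟨hT.mul_of_commute hT (.refl T), fun x => by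
    rw [Module.End.mul_apply, hT]
    exact inner_self_nonneg⟩

theorem LinearMap.IsSymmetric.le_one_of_mul_self_eq_one {C : E →ₗ[𝕜] E} (hC : C.IsSymmetric)
    (hC2 : C * C = 1) : C ≤ 1 := by
  have h : 1 - C = ((2⁻¹ : ℝ) : 𝕜) • ((1 - C) * (1 - C)) := by
    rw [sub_mul, mul_sub, mul_sub, hC2, mul_one, one_mul]
    match_scalars <;> norm_num
  rw [LinearMap.le_def, h]
  exact (IsSymmetric.one.sub hC).isPositive_mul_self.smul_of_nonneg
    (RCLike.ofReal_nonneg.mpr (by norm_num))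

/-- Operator form of Tsirelson's bound. -/
theorem LinearMap.IsSymmetric.add_le_of_mul_self_add_mul_self_eq_four {X Y : E →ₗ[𝕜] E}
    (hX : X.IsSymmetric) (hY : Y.IsSymmetric) (hXY : X * X + Y * Y = 4) :
    X + Y ≤ ((2 * √2 : ℝ) : 𝕜) • 1 := by
  have hr2 : ((√2 : ℝ) : 𝕜) * ((√2 : ℝ) : 𝕜) = 2 := by
    rw [← RCLike.ofReal_mul, Real.mul_self_sqrt zero_le_two, RCLike.ofReal_ofNat]
  have hsym : ∀ Z : E →ₗ[𝕜] E, Z.IsSymmetric → (((√2 : ℝ) : 𝕜) • 1 - Z).IsSymmetric :=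
    fun Z hZ => (IsSymmetric.one.smul (RCLike.conj_ofReal _)).sub hZ
  have h4 : X * X + Y * Y = (4 : 𝕜) • 1 := by rw [hXY, ofNat_smul_eq_nsmul, nsmul_one]; rfl
  have hsos : ((2 * √2 : ℝ) : 𝕜) • 1 - (X + Y) = (2 * ((√2 : ℝ) : 𝕜))⁻¹ •
      ((((√2 : ℝ) : 𝕜) • 1 - X) * (((√2 : ℝ) : 𝕜) • 1 - X)
        + (((√2 : ℝ) : 𝕜) • 1 - Y) * (((√2 : ℝ) : 𝕜) • 1 - Y)) := by
    rw [eq_inv_smul_iff₀ (by positivity), RCLike.ofReal_mul, RCLike.ofReal_ofNat]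
    simp only [sub_mul, mul_sub, smul_mul_assoc, mul_smul_comm, one_mul, mul_one]
    linear_combination (norm := module) -h4 + hr2 • (2 • 1 : E →ₗ[𝕜] E)
  rw [LinearMap.le_def, hsos]
  exact ((hsym X hX).isPositive_mul_self.add (hsym Y hY).isPositive_mul_self).smul_of_nonneg
    (by positivity)

theorem LinearMap.re_inner_map_le_of_le_smul_one {T : E →ₗ[𝕜] E} {c : ℝ}
    (hT : T ≤ (c : 𝕜) • 1) {ψ : E} (hψ : ‖ψ‖ = 1) : RCLike.re ⟪ψ, T ψ⟫_𝕜 ≤ c := by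
  have h := ((LinearMap.le_def _ _).mp hT).re_inner_nonneg_right ψ
  rw [LinearMap.sub_apply, LinearMap.smul_apply, Module.End.one_apply, inner_sub_right,
    inner_smul_right, inner_self_eq_norm_sq_to_K, hψ, map_sub] at h
  simpa using h

end Operators

structure CommutingObservables (A B : Fin N → H →ₗ[ℂ] H) : Prop where
  isSymmetric_A : ∀ i, (A i).IsSymmetric
  isSymmetric_B : ∀ i, (B i).IsSymmetric
  A_mul_self : ∀ i, A i * A i = 1
  B_mul_self : ∀ i, B i * B i = 1
  commute_A_A : ∀ i j, i ≠ j → Commute (A i) (A j)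
  commute_B_B : ∀ i j, i ≠ j → Commute (B i) (B j)
  commute_A_B : ∀ i j, i ≠ j → Commute (A i) (B j)

abbrev localAlgebra (A B : Fin N → H →ₗ[ℂ] H) (i : Fin N) : Subalgebra ℂ (H →ₗ[ℂ] H) :=
  Algebra.adjoin ℂ {A i, B i}

def obsOutside (A B : Fin N → H →ₗ[ℂ] H) (AC : Finset (Fin N)) (s : Fin N → ℤ) :
    H →ₗ[ℂ] H :=
  (((List.finRange N).filter (fun i => i ∉ AC)).map (fun i => obs A B i (s i))).prod

variable {A B : Fin N → H →ₗ[ℂ] H} {AC : Finset (Fin N)}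

theorem A_add_zsmul_B_mem_localAlgebra (i : Fin N) (n : ℤ) :
    A i + n • B i ∈ localAlgebra A B i :=
  add_mem (Algebra.subset_adjoin (by simp)) (zsmul_mem (Algebra.subset_adjoin (by simp)) n)

theorem obs_mem_localAlgebra (i : Fin N) (k : ℤ) : obs A B i k ∈ localAlgebra A B i := by
  unfold obs
  split_ifs
  · exact Algebra.subset_adjoin (by simp)
  · exact Algebra.subset_adjoin (by simp)
  · exact one_mem _

theorem bellTerm_eq_obsOutside (u : Fin N → ℤ) (hu : ∀ i ∈ AC, u i = 0) :
    bellTerm A B AC u = obsOutside A B AC u := by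
  have hnil : (List.finRange N).filter (fun i => i ∈ AC ∧ u i ≠ 0) = [] :=
    List.filter_eq_nil_iff.mpr fun i _ => by simpa using hu i
  rw [bellTerm, hnil, List.map_nil, List.prod_nil, one_mul, obsOutside]

theorem bellTerm_eq_mul_obsOutside (s : Fin N → ℤ) {T : Fin N} (hT : T ∈ AC) (hsT : s T ≠ 0)
    (hs : ∀ i ∈ AC, i ≠ T → s i = 0) :
    bellTerm A B AC s = (A T + s T • B T) * obsOutside A B AC s := by
  have hsingle : (List.finRange N).filter (fun i => i ∈ AC ∧ s i ≠ 0) = [T] := by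
    have hiff : ∀ i, (i ∈ AC ∧ s i ≠ 0) ↔ i = T := fun i =>
      ⟨fun ⟨hi, hsi⟩ => by_contra fun hne => hsi (hs i hi hne), by rintro rfl; exact ⟨hT, hsT⟩⟩
    simp only [hiff]
    rw [List.filter_eq, List.count_eq_one_of_mem (List.nodup_finRange N) (List.mem_finRange T),
      List.replicate_one]
  rw [bellTerm, hsingle, List.map_singleton, List.prod_singleton, obsOutside]

namespace CommutingObservables

theorem commute_of_mem_localAlgebra (h : CommutingObservables A B) {i j : Fin N} (hij : i ≠ j)
    {x y : H →ₗ[ℂ] H} (hx : x ∈ localAlgebra A B i) (hy : y ∈ localAlgebra A B j) :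
    Commute x y := by
  refine Algebra.commute_of_mem_adjoin_of_forall_mem_commute hy fun b hb => ?_
  refine (Algebra.commute_of_mem_adjoin_of_forall_mem_commute hx fun a ha => ?_).symm
  rcases ha with rfl | rfl <;> rcases hb with rfl | rfl
  · exact h.commute_A_A j i hij.symm
  · exact (h.commute_A_B i j hij).symm
  · exact h.commute_A_B j i hij.symm
  · exact h.commute_B_B j i hij.symm

theorem isSymmetric_obs (h : CommutingObservables A B) (i : Fin N) (k : ℤ) :
    (obs A B i k).IsSymmetric := by
  unfold obs
  split_ifs
  exacts [h.isSymmetric_A i, h.isSymmetric_B i, LinearMap.IsSymmetric.one]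

theorem obs_mul_self (h : CommutingObservables A B) (i : Fin N) (k : ℤ) :
    obs A B i k * obs A B i k = 1 := by
  unfold obs
  split_ifs
  exacts [h.A_mul_self i, h.B_mul_self i, one_mul 1]

theorem isSymmetric_A_add_zsmul_B (h : CommutingObservables A B) (i : Fin N) (n : ℤ) :
    (A i + n • B i).IsSymmetric := by
  rw [← Int.cast_smul_eq_zsmul ℂ]
  exact (h.isSymmetric_A i).add ((h.isSymmetric_B i).smul (by simp))

theorem pairwise_commute_obsOutside_factors (h : CommutingObservables A B) (s : Fin N → ℤ) :
    (((List.finRange N).filter (fun i => i ∉ AC)).map (fun i => obs A B i (s i))).Pairwise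
      Commute :=
  List.Pairwise.map _ (fun _ _ hij => h.commute_of_mem_localAlgebra hij
    (obs_mem_localAlgebra _ _) (obs_mem_localAlgebra _ _)) ((List.nodup_finRange N).filter _)

theorem isSymmetric_obsOutside (h : CommutingObservables A B) (s : Fin N → ℤ) :
    (obsOutside A B AC s).IsSymmetric :=
  LinearMap.isSymmetric_list_prod (h.pairwise_commute_obsOutside_factors s) fun _ hx => by
    obtain ⟨i, -, rfl⟩ := List.mem_map.mp hx
    exact h.isSymmetric_obs i _

theorem obsOutside_mul_self (h : CommutingObservables A B) (s : Fin N → ℤ) :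
    obsOutside A B AC s * obsOutside A B AC s = 1 :=
  List.prod_mul_self_eq_one_of_pairwise_commute (h.pairwise_commute_obsOutside_factors s)
    fun _ hx => by
      obtain ⟨i, -, rfl⟩ := List.mem_map.mp hx
      exact h.obs_mul_self i _

theorem commute_obsOutside (h : CommutingObservables A B) (s : Fin N → ℤ) {T : Fin N}
    (hT : T ∈ AC) {x : H →ₗ[ℂ] H} (hx : x ∈ localAlgebra A B T) :
    Commute x (obsOutside A B AC s) :=
  Commute.list_prod_right _ _ fun _ hy => by
    obtain ⟨i, hi, rfl⟩ := List.mem_map.mp hy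
    have hiT : T ≠ i := by rintro rfl; simp_all
    exact h.commute_of_mem_localAlgebra hiT hx (obs_mem_localAlgebra _ _)

theorem bellTerm_le_one (h : CommutingObservables A B) (u : Fin N → ℤ)
    (hu : ∀ i ∈ AC, u i = 0) : bellTerm A B AC u ≤ 1 := by
  rw [bellTerm_eq_obsOutside u hu]
  exact (h.isSymmetric_obsOutside u).le_one_of_mul_self_eq_one (h.obsOutside_mul_self u)

theorem isSymmetric_bellTerm (h : CommutingObservables A B) (s : Fin N → ℤ) {T : Fin N}
    (hT : T ∈ AC) (hsT : s T ≠ 0) (hs : ∀ i ∈ AC, i ≠ T → s i = 0) :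
    (bellTerm A B AC s).IsSymmetric := by
  rw [bellTerm_eq_mul_obsOutside s hT hsT hs]
  exact (h.isSymmetric_A_add_zsmul_B T (s T)).mul_of_commute (h.isSymmetric_obsOutside s)
    (h.commute_obsOutside s hT (A_add_zsmul_B_mem_localAlgebra T (s T)))

theorem bellTerm_mul_self (h : CommutingObservables A B) (s : Fin N → ℤ) {T : Fin N}
    (hT : T ∈ AC) (hsT : s T ≠ 0) (hs : ∀ i ∈ AC, i ≠ T → s i = 0) :
    bellTerm A B AC s * bellTerm A B AC s = (A T + s T • B T) * (A T + s T • B T) := by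
  rw [bellTerm_eq_mul_obsOutside s hT hsT hs,
    (h.commute_obsOutside s hT (A_add_zsmul_B_mem_localAlgebra T (s T))).symm.mul_mul_mul_comm,
    h.obsOutside_mul_self, mul_one]

theorem bellTerm_add_bellTerm_le (h : CommutingObservables A B) (s t : Fin N → ℤ) {T : Fin N}
    (hT : T ∈ AC) (hst : s T * t T = -1) (hst0 : ∀ i ∈ AC, i ≠ T → s i = 0 ∧ t i = 0) :
    bellTerm A B AC s + bellTerm A B AC t ≤ ((2 * √2 : ℝ) : ℂ) • 1 := by
  have hne : s T * t T ≠ 0 := by rw [hst]; decide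
  have hsT : s T ≠ 0 := left_ne_zero_of_mul hne
  have htT : t T ≠ 0 := right_ne_zero_of_mul hne
  have hs := fun i hi hiT => (hst0 i hi hiT).1
  have ht := fun i hi hiT => (hst0 i hi hiT).2
  refine (h.isSymmetric_bellTerm s hT hsT hs).add_le_of_mul_self_add_mul_self_eq_four
    (h.isSymmetric_bellTerm t hT htT ht) ?_
  rw [h.bellTerm_mul_self s hT hsT hs, h.bellTerm_mul_self t hT htT ht]
  exact add_zsmul_mul_self_add_add_zsmul_mul_self (h.A_mul_self T) (h.B_mul_self T) hst

end CommutingObservables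

theorem quantum_general_bell_bound_general
    (A B : Fin N → H →ₗ[ℂ] H)
    (hAsa : ∀ i, (A i).IsSymmetric) (hBsa : ∀ i, (B i).IsSymmetric)
    (hA2 : ∀ i, A i * A i = 1) (hB2 : ∀ i, B i * B i = 1)
    (hAA : ∀ i j, i ≠ j → Commute (A i) (A j))
    (hBB : ∀ i j, i ≠ j → Commute (B i) (B j))
    (hAB : ∀ i j, i ≠ j → Commute (A i) (B j))
    (AC : Finset (Fin N))
    (P : List ((Fin N → ℤ) × (Fin N → ℤ))) (R : List (Fin N → ℤ))
    -- Requirement 1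
    (hreq1 : ∀ p ∈ P, ∃ T ∈ AC, p.1 T * p.2 T = -1 ∧
      ∀ i ∈ AC, i ≠ T → p.1 i = 0 ∧ p.2 i = 0)
    -- Requirement 2
    (hreq2 : ∀ u ∈ R, ∀ i ∈ AC, u i = 0) :
    (∀ φ : H,
      0 ≤ (⟪φ, (((2 * Real.sqrt 2 * P.length + R.length : ℝ) : ℂ) •
              (1 : H →ₗ[ℂ] H)
            - ((P.map (fun p => bellTerm A B AC p.1 + bellTerm A B AC p.2)).sum
               + (R.map (fun u => bellTerm A B AC u)).sum)) φ⟫_ℂ).re) ∧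
    (∀ ψ : H, ‖ψ‖ = 1 →
      (⟪ψ, ((P.map (fun p => bellTerm A B AC p.1 + bellTerm A B AC p.2)).sum
            + (R.map (fun u => bellTerm A B AC u)).sum) ψ⟫_ℂ).re
        ≤ 2 * Real.sqrt 2 * P.length + R.length) := by
  have h : CommutingObservables A B := ⟨hAsa, hBsa, hA2, hB2, hAA, hBB, hAB⟩
  have hle : (P.map (fun p => bellTerm A B AC p.1 + bellTerm A B AC p.2)).sum
      + (R.map (fun u => bellTerm A B AC u)).sum
      ≤ ((2 * Real.sqrt 2 * P.length + R.length : ℝ) : ℂ) • 1 := by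
    calc _ ≤ (P.map fun _ => ((2 * √2 : ℝ) : ℂ) • (1 : H →ₗ[ℂ] H)).sum
          + (R.map fun _ => (1 : H →ₗ[ℂ] H)).sum := by
          refine add_le_add (List.sum_le_sum fun p hp => ?_) (List.sum_le_sum fun u hu => ?_)
          · obtain ⟨T, hT, hst, hst0⟩ := hreq1 p hp
            exact h.bellTerm_add_bellTerm_le p.1 p.2 hT hst hst0
          · exact h.bellTerm_le_one u (hreq2 u hu)
      _ = _ := by
          simp only [List.map_const', List.sum_replicate, ← Nat.cast_smul_eq_nsmul ℂ]
          push_cast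
          module
  exact ⟨((LinearMap.le_def _ _).mp hle).re_inner_nonneg_right,
    fun ψ hψ => LinearMap.re_inner_map_le_of_le_smul_one hle hψ⟩

theorem quantum_general_bell_bound [FiniteDimensional ℂ H]
    (A B : Fin N → H →ₗ[ℂ] H)
    (hAsa : ∀ i, (A i).IsSymmetric) (hBsa : ∀ i, (B i).IsSymmetric)
    (hA2 : ∀ i, A i * A i = 1) (hB2 : ∀ i, B i * B i = 1)
    (hAA : ∀ i j, i ≠ j → Commute (A i) (A j))
    (hBB : ∀ i j, i ≠ j → Commute (B i) (B j))
    (hAB : ∀ i j, i ≠ j → Commute (A i) (B j))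
    (AC : Finset (Fin N))
    (P : List ((Fin N → ℤ) × (Fin N → ℤ))) (R : List (Fin N → ℤ))
    (hsignP : ∀ p ∈ P, (∀ i, p.1 i = -1 ∨ p.1 i = 0 ∨ p.1 i = 1) ∧
                       (∀ i, p.2 i = -1 ∨ p.2 i = 0 ∨ p.2 i = 1))
    (hsignR : ∀ u ∈ R, ∀ i, u i = -1 ∨ u i = 0 ∨ u i = 1)
    -- Requirement 1
    (hreq1 : ∀ p ∈ P, ∃ T ∈ AC, p.1 T * p.2 T = -1 ∧
      ∀ i ∈ AC, i ≠ T → p.1 i = 0 ∧ p.2 i = 0)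
    -- Requirement 2
    (hreq2 : ∀ u ∈ R, ∀ i ∈ AC, u i = 0) :
    (∀ φ : H,
      0 ≤ (⟪φ, (((2 * Real.sqrt 2 * P.length + R.length : ℝ) : ℂ) •
              (1 : H →ₗ[ℂ] H)
            - ((P.map (fun p => bellTerm A B AC p.1 + bellTerm A B AC p.2)).sum
               + (R.map (fun u => bellTerm A B AC u)).sum)) φ⟫_ℂ).re) ∧
    (∀ ψ : H, ‖ψ‖ = 1 →
      (⟪ψ, ((P.map (fun p => bellTerm A B AC p.1 + bellTerm A B AC p.2)).sum
            + (R.map (fun u => bellTerm A B AC u)).sum) ψ⟫_ℂ).re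
        ≤ 2 * Real.sqrt 2 * P.length + R.length) :=
  quantum_general_bell_bound_general A B hAsa hBsa hA2 hB2 hAA hBB hAB AC P R hreq1 hreq2
end
end

section
/- Let G = (V,E) be a finite simple graph, and on a finite-dimensional complex Hilbert space let operators X̃_v, Z̃_v (v ∈ V) be given such that Z̃_v² = I for all v and any two operators attached to distinct vertices commute. Let v, w ∈ V be adjacent, and let ψ be a vector with X̃_v ψ = ∏_{k∈n_v} Z̃_k ψ and X̃_w ψ = ∏_{k∈n_w} Z̃_k ψ. Then (X̃_w Z̃_w + Z̃_w X̃_w) ψ = ∏_{i∈C(v,w)} Z̃_i · (X̃_v Z̃_v + Z̃_v X̃_v) ψ, where C(v,w) = (n_v ∪ n_w) \ ({v,w} ∪ (n_v ∩ n_w)). -/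
/-!
Write `P S` for the product of the `Z k` over `k ∈ S`. Since the `Z k` commute and square to
the identity, `P S * P T = P (S ∆ T)`. With closed neighbourhoods `N[u] = insert u (N u)` the
stabilizer relation reads `Z u X u ψ = P N[u] ψ`, so `Z w X w ψ = P (N[v] ∆ N[w]) Z v X v ψ` for
any `v`, `w`. For the other order evaluate `X v X w ψ = X w X v ψ`: moving `X v` through
`P (N w)` turns its factor `Z v` into `X v Z v`, so `P (N w \ {v}) X v Z v ψ =
P (N v \ {w}) X w Z w ψ`, and the two correction products again combine to `P (N[v] ∆ N[w])`.
For adjacent `v`, `w` that set is `C(v, w)`.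
-/

open scoped symmDiff
open Finset

namespace Finset

section CommutingProduct

variable {ι M : Type*} [Monoid M] (f : ι → M) (hf : ∀ i j, Commute (f i) (f j))

def commProd (s : Finset ι) : M :=
  s.noncommProd f fun i _ j _ _ => hf i j

theorem commProd_eq_prod_map_toList [DecidableEq ι] (s : Finset ι) :
    s.commProd f hf = (s.toList.map f).prod := by
  rw [← noncommProd_toFinset s.toList f (fun i _ j _ _ => hf i j) s.nodup_toList]
  simp only [commProd, toList_toFinset]

theorem commute_commProd {a : M} {s : Finset ι} (h : ∀ i ∈ s, Commute a (f i)) :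
    Commute a (s.commProd f hf) :=
  noncommProd_commute _ _ _ _ h

variable [DecidableEq ι]

theorem commProd_insert {i : ι} {s : Finset ι} (hi : i ∉ s) :
    (insert i s).commProd f hf = f i * s.commProd f hf :=
  noncommProd_insert_of_notMem _ _ _ _ hi

theorem mul_commProd_erase {i : ι} {s : Finset ι} (hi : i ∈ s) :
    f i * (s.erase i).commProd f hf = s.commProd f hf :=
  mul_noncommProd_erase _ hi _ _

theorem commProd_union {s t : Finset ι} (h : Disjoint s t) :
    (s ∪ t).commProd f hf = s.commProd f hf * t.commProd f hf :=
  noncommProd_union_of_disjoint h _ _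

variable {f}

theorem commProd_mul_self (hf2 : ∀ i, f i * f i = 1) (s : Finset ι) :
    s.commProd f hf * s.commProd f hf = 1 := by
  induction s using Finset.induction_on with
  | empty => exact mul_one _
  | insert i s hi ih =>
    rw [commProd_insert f hf hi, mul_assoc, ← mul_assoc (s.commProd f hf),
      ← (commute_commProd f hf fun j _ => hf i j).eq, mul_assoc, ih, mul_one, hf2]

theorem commProd_mul_commProd (hf2 : ∀ i, f i * f i = 1) (s t : Finset ι) :
    s.commProd f hf * t.commProd f hf = (s ∆ t).commProd f hf := by
  calc s.commProd f hf * t.commProd f hf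
        = (s \ t).commProd f hf * ((s ∩ t).commProd f hf * (s ∩ t).commProd f hf) *
            (t \ s).commProd f hf := by
        rw [mul_assoc, mul_assoc,
          ← commProd_union f hf (disjoint_sdiff.mono_left inter_subset_left), ← mul_assoc,
          ← commProd_union f hf (disjoint_sdiff_inter s t), sdiff_union_inter,
          inter_comm s t, union_comm, sdiff_union_inter]
    _ = (s ∆ t).commProd f hf := by
        rw [commProd_mul_self hf hf2, mul_one, ← commProd_union f hf disjoint_sdiff_sdiff,
          symmDiff_def]
        rfl

theorem mul_commProd_eq_commProd_erase_mul {x : M} {i : ι} {s : Finset ι} (hi : i ∈ s)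
    (hx : ∀ j, i ≠ j → Commute x (f j)) :
    x * s.commProd f hf = (s.erase i).commProd f hf * (x * f i) := by
  have hxf : Commute (x * f i) ((s.erase i).commProd f hf) :=
    commute_commProd f hf fun j hj => (hx j (ne_of_mem_erase hj).symm).mul_left (hf i j)
  rw [← mul_commProd_erase f hf hi, ← mul_assoc, hxf.eq]

end CommutingProduct

end Finset

namespace SimpleGraph

variable {V : Type*} [Fintype V] [DecidableEq V] (G : SimpleGraph V) [DecidableRel G.Adj]

def closedNeighborFinset (v : V) : Finset V :=
  insert v (G.neighborFinset v)

variable {G} {v w : V}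

theorem Adj.closedNeighborFinset_symmDiff (h : G.Adj v w) :
    G.closedNeighborFinset v ∆ G.closedNeighborFinset w =
      (G.neighborFinset v ∪ G.neighborFinset w) \
        ({v, w} ∪ (G.neighborFinset v ∩ G.neighborFinset w)) := by
  ext k
  simp only [closedNeighborFinset, mem_symmDiff, mem_insert, mem_sdiff, mem_union, mem_inter,
    mem_singleton, mem_neighborFinset]
  grind [Adj.ne, Adj.symm, G.loopless]

theorem Adj.erase_symmDiff_erase (h : G.Adj v w) :
    (G.neighborFinset v).erase w ∆ (G.neighborFinset w).erase v =
      G.closedNeighborFinset v ∆ G.closedNeighborFinset w := by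
  ext k
  simp only [closedNeighborFinset, mem_symmDiff, mem_insert, mem_erase, mem_neighborFinset]
  grind [Adj.ne, Adj.symm, G.loopless]

section Stabilizer

variable {M α : Type*} [Monoid M] [MulAction M α] {X Z : V → M}
  (hZ : ∀ a b, Commute (Z a) (Z b)) {ψ : α}

theorem Z_mul_X_smul_eq_commProd_smul
    (hv : X v • ψ = (G.neighborFinset v).commProd Z hZ • ψ) :
    (Z v * X v) • ψ = (G.closedNeighborFinset v).commProd Z hZ • ψ := by
  rw [mul_smul, hv, smul_smul, closedNeighborFinset,
    commProd_insert Z hZ (G.notMem_neighborFinset_self v)]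

theorem Z_mul_X_smul_eq_commProd_symmDiff_mul_smul (hZ2 : ∀ a, Z a * Z a = 1)
    (hv : X v • ψ = (G.neighborFinset v).commProd Z hZ • ψ)
    (hw : X w • ψ = (G.neighborFinset w).commProd Z hZ • ψ) :
    (Z w * X w) • ψ =
      ((G.closedNeighborFinset v ∆ G.closedNeighborFinset w).commProd Z hZ *
        (Z v * X v)) • ψ := by
  rw [Z_mul_X_smul_eq_commProd_smul hZ hw, mul_smul, Z_mul_X_smul_eq_commProd_smul hZ hv,
    ← mul_smul, commProd_mul_commProd hZ hZ2, symmDiff_symmDiff_self']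

theorem Adj.X_mul_Z_smul_eq_commProd_symmDiff_mul_smul (h : G.Adj v w)
    (hZ2 : ∀ a, Z a * Z a = 1)
    (hXX : Commute (X v) (X w)) (hXZ : ∀ a b, a ≠ b → Commute (X a) (Z b))
    (hv : X v • ψ = (G.neighborFinset v).commProd Z hZ • ψ)
    (hw : X w • ψ = (G.neighborFinset w).commProd Z hZ • ψ) :
    (X w * Z w) • ψ =
      ((G.closedNeighborFinset v ∆ G.closedNeighborFinset w).commProd Z hZ *
        (X v * Z v)) • ψ := by
  set Qv := ((G.neighborFinset v).erase w).commProd Z hZ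
  set Qw := ((G.neighborFinset w).erase v).commProd Z hZ
  have hXw : X w * (G.neighborFinset v).commProd Z hZ = Qv * (X w * Z w) :=
    mul_commProd_eq_commProd_erase_mul hZ (G.mem_neighborFinset v w |>.2 h) (hXZ w)
  have hXv : X v * (G.neighborFinset w).commProd Z hZ = Qw * (X v * Z v) :=
    mul_commProd_eq_commProd_erase_mul hZ (G.mem_neighborFinset w v |>.2 h.symm) (hXZ v)
  -- both sides equal `X v • X w • ψ = X w • X v • ψ`
  have key : (Qw * (X v * Z v)) • ψ = (Qv * (X w * Z w)) • ψ := by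
    rw [← hXw, ← hXv, mul_smul, mul_smul, ← hv, ← hw, ← mul_smul, ← mul_smul, hXX.eq]
  calc (X w * Z w) • ψ = (Qv * Qv * (X w * Z w)) • ψ := by
        rw [commProd_mul_self hZ hZ2, one_mul]
    _ = (Qv * Qw * (X v * Z v)) • ψ := by
        rw [mul_assoc, mul_smul, ← key, ← mul_smul, mul_assoc]
    _ = _ := by rw [commProd_mul_commProd hZ hZ2, h.erase_symmDiff_erase]

end Stabilizer

end SimpleGraph

theorem anticommutator_edge_relation_general
    {V : Type} [Fintype V] [DecidableEq V]
    (G : SimpleGraph V) [DecidableRel G.Adj]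
    {H : Type} [NormedAddCommGroup H] [InnerProductSpace ℂ H]
    (X Z : V → H →ₗ[ℂ] H)
    (hZ2 : ∀ v, Z v * Z v = 1)
    (hXX : ∀ u v, u ≠ v → Commute (X u) (X v))
    (hXZ : ∀ u v, u ≠ v → Commute (X u) (Z v))
    (hZZ : ∀ u v, u ≠ v → Commute (Z u) (Z v))
    (v w : V) (hvw : G.Adj v w)
    (ψ : H)
    (hv : (X v) ψ = (((G.neighborFinset v).toList.map Z).prod) ψ)
    (hw : (X w) ψ = (((G.neighborFinset w).toList.map Z).prod) ψ) :
    (X w * Z w + Z w * X w) ψ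
      = (((((G.neighborFinset v ∪ G.neighborFinset w) \
            ({v, w} ∪ (G.neighborFinset v ∩ G.neighborFinset w))).toList.map
              Z).prod) * (X v * Z v + Z v * X v)) ψ := by
  have hZ : ∀ a b, Commute (Z a) (Z b) := fun a b =>
    (eq_or_ne a b).elim (fun hab => hab ▸ Commute.refl _) (hZZ a b)
  simp only [← commProd_eq_prod_map_toList Z hZ] at hv hw ⊢
  rw [← hvw.closedNeighborFinset_symmDiff, mul_add, LinearMap.add_apply, LinearMap.add_apply]
  exact congrArg₂ (· + ·)
    (hvw.X_mul_Z_smul_eq_commProd_symmDiff_mul_smul hZ hZ2 (hXX v w hvw.ne) hXZ hv hw)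
    (SimpleGraph.Z_mul_X_smul_eq_commProd_symmDiff_mul_smul hZ hZ2 hv hw)

theorem anticommutator_edge_relation
    {V : Type} [Fintype V] [DecidableEq V]
    (G : SimpleGraph V) [DecidableRel G.Adj]
    {H : Type} [NormedAddCommGroup H] [InnerProductSpace ℂ H]
    [FiniteDimensional ℂ H]
    (X Z : V → H →ₗ[ℂ] H)
    (hZ2 : ∀ v, Z v * Z v = 1)
    (hXX : ∀ u v, u ≠ v → Commute (X u) (X v))
    (hXZ : ∀ u v, u ≠ v → Commute (X u) (Z v))
    (hZZ : ∀ u v, u ≠ v → Commute (Z u) (Z v))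
    (v w : V) (hvw : G.Adj v w)
    (ψ : H)
    (hv : (X v) ψ = (((G.neighborFinset v).toList.map Z).prod) ψ)
    (hw : (X w) ψ = (((G.neighborFinset w).toList.map Z).prod) ψ) :
    (X w * Z w + Z w * X w) ψ
      = (((((G.neighborFinset v ∪ G.neighborFinset w) \
            ({v, w} ∪ (G.neighborFinset v ∩ G.neighborFinset w))).toList.map
              Z).prod) * (X v * Z v + Z v * X v)) ψ :=
  anticommutator_edge_relation_general G X Z hZ2 hXX hXZ hZZ v w hvw ψ hv hw
end

section
/- Let G = (V,E) be a finite simple connected graph, and on a finite-dimensional complex Hilbert space let operators X̃_v, Z̃_v (v ∈ V) be given such that Z̃_v² = I for all v and any two operators attached to distinct vertices commute. Suppose a vector ψ satisfies X̃_v ψ = ∏_{k∈n_v} Z̃_k ψ for every v ∈ V, and that (X̃_{v_0} Z̃_{v_0} + Z̃_{v_0} X̃_{v_0}) ψ = 0 for some vertex v_0. Then (X̃_v Z̃_v + Z̃_v X̃_v) ψ = 0 for every vertex v ∈ V. -/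
/-!
STATEMENT 13: on a connected graph, if abstract vertex operators satisfy the
graph-state stabilizer relations on ψ and anticommute on ψ at one vertex, then
they anticommute on ψ at every vertex.
-/

noncomputable section

section AuxLemmas

variable {R : Type*} [Monoid R] {V : Type*}

lemma aux_comm_prod (Z : V → R) (A : R) (l : List V)
    (h : ∀ k ∈ l, Commute A (Z k)) : Commute A ((l.map Z).prod) :=
  Commute.list_prod_right _ _ (by
    intro x hx
    obtain ⟨k, hk, rfl⟩ := List.mem_map.mp hx
    exact h k hk)

lemma aux_pairwise (Z : V → R) (hZZ' : ∀ a b, Commute (Z a) (Z b)) (l : List V) :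
    List.Pairwise Commute (l.map Z) := by
  refine List.pairwise_map.mpr ?_
  induction l with
  | nil => exact List.Pairwise.nil
  | cons a t ih => exact List.Pairwise.cons (fun b _ => hZZ' a b) ih

lemma aux_prod_sq (Z : V → R) (hZ2 : ∀ v, Z v * Z v = 1)
    (hZZ' : ∀ a b, Commute (Z a) (Z b)) (l : List V) :
    ((l.map Z).prod) * ((l.map Z).prod) = 1 := by
  induction l with
  | nil => simp
  | cons a t ih =>
    have hc : Commute ((t.map Z).prod) (Z a) :=
      (aux_comm_prod Z (Z a) t (fun k _ => hZZ' a k)).symm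
    simp only [List.map_cons, List.prod_cons]
    rw [hc.mul_mul_mul_comm, hZ2, ih, one_mul]

lemma aux_prod_factor [DecidableEq V] (Z : V → R)
    (hZZ' : ∀ a b, Commute (Z a) (Z b)) {l : List V} {u : V} (hu : u ∈ l) :
    (l.map Z).prod = Z u * ((l.erase u).map Z).prod := by
  have hp : (l.map Z).Perm ((u :: l.erase u).map Z) :=
    (List.perm_cons_erase hu).map Z
  have := hp.prod_eq' (aux_pairwise Z hZZ' l)
  simpa using this

end AuxLemmas

lemma edge_step
    {V : Type} [Fintype V] [DecidableEq V]
    (G : SimpleGraph V) [DecidableRel G.Adj]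
    {H : Type} [NormedAddCommGroup H] [InnerProductSpace ℂ H]
    (X Z : V → H →ₗ[ℂ] H)
    (hZ2 : ∀ v, Z v * Z v = 1)
    (hXX : ∀ u v, u ≠ v → Commute (X u) (X v))
    (hXZ : ∀ u v, u ≠ v → Commute (X u) (Z v))
    (hZZ : ∀ u v, u ≠ v → Commute (Z u) (Z v))
    (ψ : H)
    (hstab : ∀ v : V, (X v) ψ = (((G.neighborFinset v).toList.map Z).prod) ψ)
    {u v : V} (hAdj : G.Adj u v)
    (hu : (X u * Z u + Z u * X u) ψ = 0) :
    (X v * Z v + Z v * X v) ψ = 0 := by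
  have hZZ' : ∀ a b, Commute (Z a) (Z b) := by
    intro a b
    rcases eq_or_ne a b with rfl | h
    · exact Commute.refl _
    · exact hZZ a b h
  have huv : u ≠ v := hAdj.ne
  set lu := (G.neighborFinset u).toList with hlu
  set lv := (G.neighborFinset v).toList with hlv
  have hvlu : v ∈ lu := Finset.mem_toList.mpr ((G.mem_neighborFinset u v).mpr hAdj)
  have hulv : u ∈ lv := Finset.mem_toList.mpr ((G.mem_neighborFinset v u).mpr hAdj.symm)
  have hndu : lu.Nodup := Finset.nodup_toList _
  have hndv : lv.Nodup := Finset.nodup_toList _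
  set Q := ((lu.erase v).map Z).prod with hQdef
  set R := ((lv.erase u).map Z).prod with hRdef
  -- commutation facts
  have cXvQ : Commute (X v) Q := by
    refine aux_comm_prod Z (X v) _ (fun k hk => ?_)
    exact hXZ v k (Ne.symm (hndu.mem_erase_iff.mp hk).1)
  have cXuR : Commute (X u) R := by
    refine aux_comm_prod Z (X u) _ (fun k hk => ?_)
    exact hXZ u k (Ne.symm (hndv.mem_erase_iff.mp hk).1)
  have cZQ : ∀ a, Commute (Z a) Q := fun a =>
    aux_comm_prod Z (Z a) _ (fun k _ => hZZ' a k)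
  have cZR : ∀ a, Commute (Z a) R := fun a =>
    aux_comm_prod Z (Z a) _ (fun k _ => hZZ' a k)
  have cQR : Commute Q R := by
    refine Commute.list_prod_right _ _ (fun x hx => ?_)
    obtain ⟨k, _, rfl⟩ := List.mem_map.mp hx
    exact (cZQ k).symm
  have hQQ : Q * Q = 1 := aux_prod_sq Z hZ2 hZZ' _
  -- stabilizer relations with the adjacent vertex factored out
  have hPu : (lu.map Z).prod = Z v * Q := aux_prod_factor Z hZZ' hvlu
  have hPv : (lv.map Z).prod = Z u * R := aux_prod_factor Z hZZ' hulv
  have h1 : X u ψ = Z v (Q ψ) := by rw [hstab u, hPu]; rfl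
  have h2 : X v ψ = Z u (R ψ) := by rw [hstab v, hPv]; rfl
  -- swapping helper
  have swap : ∀ {A B : H →ₗ[ℂ] H}, Commute A B → ∀ x : H, A (B x) = B (A x) := by
    intro A B h x
    rw [← Module.End.mul_apply, ← Module.End.mul_apply, h.eq]
  have hanti : X u (Z u ψ) = - (Z u (X u ψ)) := by
    have h' := hu
    rw [LinearMap.add_apply, Module.End.mul_apply, Module.End.mul_apply] at h'
    exact eq_neg_of_add_eq_zero_left h'
  have cXuXv : Commute (X u) (X v) := hXX u v huv
  have e1 : X v (Z v (Q ψ)) = Q (X v (Z v ψ)) := by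
    rw [swap (cZQ v) ψ, swap cXvQ (Z v ψ)]
  have e2 : X v (Z v (Q ψ)) = - (Q (R (Z u (Z v ψ)))) := by
    calc X v (Z v (Q ψ)) = X v (X u ψ) := by rw [h1]
      _ = X u (X v ψ) := (swap cXuXv ψ).symm
      _ = X u (Z u (R ψ)) := by rw [h2]
      _ = X u (R (Z u ψ)) := by rw [swap (cZR u) ψ]
      _ = R (X u (Z u ψ)) := swap cXuR _
      _ = R (- (Z u (X u ψ))) := by rw [hanti]
      _ = - (R (Z u (X u ψ))) := map_neg _ _
      _ = - (R (Z u (Z v (Q ψ)))) := by rw [h1]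
      _ = - (R (Z u (Q (Z v ψ)))) := by rw [swap (cZQ v) ψ]
      _ = - (R (Q (Z u (Z v ψ)))) := by rw [swap (cZQ u) (Z v ψ)]
      _ = - (Q (R (Z u (Z v ψ)))) := by rw [swap cQR.symm (Z u (Z v ψ))]
  have hQQ' : ∀ x : H, Q (Q x) = x := fun x => by
    rw [← Module.End.mul_apply, hQQ, Module.End.one_apply]
  have e3 : X v (Z v ψ) = - (R (Z u (Z v ψ))) := by
    have h3 := e1.symm.trans e2
    have h4 := congrArg Q h3
    rw [hQQ', map_neg, hQQ'] at h4
    exact h4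
  have e4 : Z v (X v ψ) = R (Z u (Z v ψ)) := by
    calc Z v (X v ψ) = Z v (Z u (R ψ)) := by rw [h2]
      _ = Z v (R (Z u ψ)) := by rw [swap (cZR u) ψ]
      _ = R (Z v (Z u ψ)) := swap (cZR v) _
      _ = R (Z u (Z v ψ)) := by rw [swap (hZZ' v u) ψ]
  rw [LinearMap.add_apply, Module.End.mul_apply, Module.End.mul_apply, e3, e4]
  exact neg_add_cancel _

theorem anticommutation_propagates
    {V : Type} [Fintype V] [DecidableEq V]
    (G : SimpleGraph V) [DecidableRel G.Adj]
    (hconn : G.Connected)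
    {H : Type} [NormedAddCommGroup H] [InnerProductSpace ℂ H]
    [FiniteDimensional ℂ H]
    (X Z : V → H →ₗ[ℂ] H)
    (hZ2 : ∀ v, Z v * Z v = 1)
    (hXX : ∀ u v, u ≠ v → Commute (X u) (X v))
    (hXZ : ∀ u v, u ≠ v → Commute (X u) (Z v))
    (hZZ : ∀ u v, u ≠ v → Commute (Z u) (Z v))
    (ψ : H)
    (hstab : ∀ v : V, (X v) ψ = (((G.neighborFinset v).toList.map Z).prod) ψ)
    (v₀ : V) (h₀ : (X v₀ * Z v₀ + Z v₀ * X v₀) ψ = 0) :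
    ∀ v : V, (X v * Z v + Z v * X v) ψ = 0 := by
  have main : ∀ (a b : V) (_ : G.Walk a b),
      (X a * Z a + Z a * X a) ψ = 0 → (X b * Z b + Z b * X b) ψ = 0 := by
    intro a b w
    induction w with
    | nil => exact id
    | cons h p ih =>
      intro ha
      exact ih (edge_step G X Z hZ2 hXX hXZ hZZ ψ hstab h ha)
  intro v
  obtain ⟨w⟩ := hconn.preconnected v₀ v
  exact main v₀ v w h₀

end
end
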